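/- arXiv:1002.0345 — 7 statements merged into one kernel-verified Lean document; each statement's English description precedes it below -/
import Mathlib

section
/- Let T be the right triangle with vertices (a,0), (a,b), and (1,0), where 0 ≤ a < 1 and b > 0. Then the average distance from the origin o = (0,0) to the points of T is strictly greater than 1/3. -/
/-!
Since `‖q‖ ≥ q₁`, with strict inequality off the horizontal axis (a null set), the average distance
from the origin over `T` strictly exceeds the average abscissa over `T`. The latter is the abscissa
`(2a + 1) / 3 ≥ 1 / 3` of the centroid of `T`, computed by Fubini after identifying the Euclidean
plane with `ℝ × ℝ`.
-/

open MeasureTheory Real Set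

theorem setIntegral_prod_eq_setIntegral_sections {α β E : Type*} [MeasurableSpace α]
    [MeasurableSpace β] [NormedAddCommGroup E] [NormedSpace ℝ E]
    {μ : Measure α} {ν : Measure β} [SFinite μ] [SFinite ν] {s : Set α} {t : α → Set β}
    (hs : MeasurableSet s)
    (hst : MeasurableSet {p : α × β | p.1 ∈ s ∧ p.2 ∈ t p.1}) {f : α × β → E}
    (hf : IntegrableOn f {p : α × β | p.1 ∈ s ∧ p.2 ∈ t p.1} (μ.prod ν)) :
    ∫ p in {p : α × β | p.1 ∈ s ∧ p.2 ∈ t p.1}, f p ∂μ.prod ν =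
      ∫ x in s, ∫ y in t x, f (x, y) ∂ν ∂μ := by
  rw [← integral_indicator hst, integral_prod _ ((integrable_indicator_iff hst).2 hf),
    ← integral_indicator hs]
  congr 1 with x
  by_cases hx : x ∈ s
  · have hsection : Prod.mk x ⁻¹' {p : α × β | p.1 ∈ s ∧ p.2 ∈ t p.1} = t x := by
      ext y; simp [hx]
    rw [indicator_of_mem hx, ← hsection, ← integral_indicator (measurable_prodMk_left hst)]
    rfl
  · simp [indicator, hx]

theorem volume_setOf_snd_eq_zero : volume {p : ℝ × ℝ | p.2 = 0} = 0 := by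
  rw [show {p : ℝ × ℝ | p.2 = 0} = univ ×ˢ {0} by ext; simp, Measure.volume_eq_prod,
    Measure.prod_prod, Real.volume_singleton, mul_zero]

theorem setIntegral_fst_lt_setIntegral_sqrt {S : Set (ℝ × ℝ)} (hS : IsCompact S)
    (hpos : 0 < volume S) :
    ∫ p in S, p.1 < ∫ p in S, √(p.1 ^ 2 + p.2 ^ 2) := by
  have hfst : IntegrableOn (fun p : ℝ × ℝ => p.1) S :=
    continuous_fst.continuousOn.integrableOn_compact hS
  have hsqrt : IntegrableOn (fun p : ℝ × ℝ => √(p.1 ^ 2 + p.2 ^ 2)) S :=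
    (by fun_prop : Continuous fun p : ℝ × ℝ => √(p.1 ^ 2 + p.2 ^ 2)).continuousOn
      |>.integrableOn_compact hS
  have hle (p : ℝ × ℝ) : p.1 ≤ √(p.1 ^ 2 + p.2 ^ 2) :=
    Real.le_sqrt_of_sq_le (le_add_of_nonneg_right (sq_nonneg _))
  have hlt (p : ℝ × ℝ) (hp : p.2 ≠ 0) : p.1 < √(p.1 ^ 2 + p.2 ^ 2) :=
    Real.lt_sqrt_of_sq_lt (lt_add_of_pos_right _ (by positivity))
  rw [← sub_pos, ← integral_sub hsqrt hfst, setIntegral_pos_iff_support_of_nonneg_ae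
    (ae_of_all _ fun p => sub_nonneg.2 (hle p)) (hsqrt.sub hfst)]
  calc 0 < volume S := hpos
    _ = volume (S \ {p | p.2 = 0}) := (measure_sdiff_null volume_setOf_snd_eq_zero).symm
    _ ≤ _ := by
      refine measure_mono fun p hp => ⟨?_, hp.1⟩
      exact (sub_pos.2 (hlt p hp.2)).ne'

def rightTriangle (a b c : ℝ) : Set (ℝ × ℝ) :=
  {p | p.1 ∈ Icc a c ∧ p.2 ∈ Icc 0 (b * (c - p.1) / (c - a))}

section

variable {a b c : ℝ}

theorem convex_rightTriangle (hac : a < c) : Convex ℝ (rightTriangle a b c) := by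
  rintro ⟨x, y⟩ ⟨hx, hy0, hy⟩ ⟨x', y'⟩ ⟨hx', hy0', hy'⟩ u v hu hv huv
  have hca : 0 < c - a := sub_pos.2 hac
  simp only [Prod.smul_mk, Prod.mk_add_mk, smul_eq_mul]
  refine ⟨convex_Icc a c hx hx' hu hv huv, by positivity, ?_⟩
  calc u * y + v * y' ≤ u * (b * (c - x) / (c - a)) + v * (b * (c - x') / (c - a)) := by gcongr
    _ = b * (c - (u * x + v * x')) / (c - a) := by
      field_simp; linear_combination b * c * huv

theorem convexHull_eq_rightTriangle (hac : a < c) (hb : 0 < b) :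
    convexHull ℝ {(a, 0), (a, b), (c, 0)} = rightTriangle a b c := by
  have hca : 0 < c - a := sub_pos.2 hac
  refine (convexHull_min ?_ (convex_rightTriangle hac)).antisymm ?_
  · rintro p (rfl | rfl | rfl) <;> simp [rightTriangle, hca.ne', hac.le, hb.le]
  · rintro ⟨x, y⟩ ⟨⟨hax, -⟩, hy0, hy⟩
    have hyb : y / b + (x - a) / (c - a) ≤ 1 := by
      rw [div_add_div _ _ hb.ne' hca.ne', div_le_one (by positivity)]
      rw [le_div_iff₀ hca] at hy
      linarith
    let w : Fin 3 → ℝ := ![1 - y / b - (x - a) / (c - a), y / b, (x - a) / (c - a)]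
    have hw : ∀ i ∈ Finset.univ, 0 ≤ w i := by
      intro i _
      fin_cases i
      · exact sub_nonneg.2 (by linarith)
      · exact div_nonneg hy0 hb.le
      · exact div_nonneg (sub_nonneg.2 hax) hca.le
    have hw1 : ∑ i, w i = 1 := by
      simp only [w, Fin.sum_univ_three, Matrix.cons_val_zero, Matrix.cons_val_one, Matrix.cons_val]
      ring
    have hcomb : ∑ i, w i • ![(a, 0), (a, b), (c, 0)] i = (x, y) := by
      simp only [w, Fin.sum_univ_three, Matrix.cons_val_zero, Matrix.cons_val_one, Matrix.cons_val,
        Prod.smul_mk, smul_eq_mul, Prod.mk_add_mk, Prod.mk.injEq]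
      constructor <;> field_simp <;> ring
    exact hcomb ▸ (convex_convexHull ℝ _).sum_mem hw hw1
      fun i _ => subset_convexHull ℝ _ (by fin_cases i <;> simp)

theorem isCompact_rightTriangle (hac : a < c) (hb : 0 < b) : IsCompact (rightTriangle a b c) := by
  rw [← convexHull_eq_rightTriangle hac hb]
  exact (toFinite _).isCompact_convexHull ℝ

theorem setIntegral_rightTriangle_comp_fst (hac : a < c) (hb : 0 < b) {φ : ℝ → ℝ}
    (hφ : Continuous φ) :
    ∫ p in rightTriangle a b c, φ p.1 = ∫ x in a..c, φ x * (b * (c - x) / (c - a)) := by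
  have hT := isCompact_rightTriangle hac hb
  have hca : 0 < c - a := sub_pos.2 hac
  rw [Measure.volume_eq_prod, rightTriangle,
    setIntegral_prod_eq_setIntegral_sections (s := Icc a c)
      (t := fun x => Icc 0 (b * (c - x) / (c - a))) (f := fun p => φ p.1) measurableSet_Icc
      hT.measurableSet ((hφ.comp continuous_fst).continuousOn.integrableOn_compact hT),
    intervalIntegral.integral_of_le hac.le, ← integral_Icc_eq_integral_Ioc]
  refine setIntegral_congr_fun measurableSet_Icc fun x hx => ?_
  have hg : 0 ≤ b * (c - x) / (c - a) := div_nonneg (mul_nonneg hb.le (sub_nonneg.2 hx.2)) hca.le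
  rw [setIntegral_const (φ x), volume_real_Icc_of_le hg, sub_zero, smul_eq_mul, mul_comm]

theorem measureReal_rightTriangle (hac : a < c) (hb : 0 < b) :
    volume.real (rightTriangle a b c) = b * (c - a) / 2 := by
  have hca : c - a ≠ 0 := (sub_pos.2 hac).ne'
  rw [← setIntegral_one_eq_measureReal,
    setIntegral_rightTriangle_comp_fst hac hb (φ := fun _ => 1) continuous_const]
  simp only [one_mul, div_eq_mul_inv, mul_comm b, mul_assoc]
  rw [intervalIntegral.integral_mul_const, intervalIntegral.integral_comp_sub_left (fun x => x),
    sub_self, integral_id]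
  field_simp
  ring

theorem setIntegral_fst_rightTriangle (hac : a < c) (hb : 0 < b) :
    ∫ p in rightTriangle a b c, p.1 = (2 * a + c) / 3 * volume.real (rightTriangle a b c) := by
  have hca : c - a ≠ 0 := (sub_pos.2 hac).ne'
  have hpoly (x : ℝ) : x * (b * (c - x) / (c - a)) = b / (c - a) * (c * x - x ^ 2) := by ring
  rw [measureReal_rightTriangle hac hb,
    setIntegral_rightTriangle_comp_fst hac hb (φ := fun x => x) continuous_id]
  simp only [hpoly]
  rw [intervalIntegral.integral_const_mul, intervalIntegral.integral_sub
    ((continuous_const_mul c).intervalIntegrable _ _) ((continuous_pow 2).intervalIntegrable _ _),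
    intervalIntegral.integral_const_mul, integral_id, integral_pow]
  field_simp
  ring

theorem lt_setIntegral_sqrt_div_measureReal_rightTriangle (hac : a < c) (hb : 0 < b) :
    (2 * a + c) / 3 <
      (∫ p in rightTriangle a b c, √(p.1 ^ 2 + p.2 ^ 2)) /
        volume.real (rightTriangle a b c) := by
  have hV : 0 < volume.real (rightTriangle a b c) := by
    rw [measureReal_rightTriangle hac hb]
    exact half_pos (mul_pos hb (sub_pos.2 hac))
  rw [lt_div_iff₀ hV, ← setIntegral_fst_rightTriangle hac hb]
  exact setIntegral_fst_lt_setIntegral_sqrt (isCompact_rightTriangle hac hb)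
    (ENNReal.toReal_pos_iff.1 hV).1

end

noncomputable def euclideanPlaneEquivProd : EuclideanSpace ℝ (Fin 2) ≃L[ℝ] ℝ × ℝ :=
  (EuclideanSpace.equiv (Fin 2) ℝ).trans (ContinuousLinearEquiv.finTwoArrow ℝ ℝ)

@[simp]
theorem euclideanPlaneEquivProd_apply (x : EuclideanSpace ℝ (Fin 2)) :
    euclideanPlaneEquivProd x = (x 0, x 1) := rfl

theorem measurePreserving_euclideanPlaneEquivProd :
    MeasurePreserving euclideanPlaneEquivProd :=
  (volume_preserving_finTwoArrow ℝ).comp (PiLp.volume_preserving_ofLp (Fin 2))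

theorem dist_zero_eq_sqrt (x : EuclideanSpace ℝ (Fin 2)) :
    dist 0 x = √((euclideanPlaneEquivProd x).1 ^ 2 + (euclideanPlaneEquivProd x).2 ^ 2) := by
  simp [EuclideanSpace.dist_eq, Fin.sum_univ_two]

theorem image_euclideanPlaneEquivProd_convexHull (a b c : ℝ) :
    euclideanPlaneEquivProd '' convexHull ℝ {!₂[a, 0], !₂[a, b], !₂[c, 0]} =
      convexHull ℝ {(a, 0), (a, b), (c, 0)} := by
  have hlin := (euclideanPlaneEquivProd : EuclideanSpace ℝ (Fin 2) →ₗ[ℝ] ℝ × ℝ)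
    |>.image_convexHull {!₂[a, 0], !₂[a, b], !₂[c, 0]}
  simpa [image_insert_eq] using hlin

/-- Let `T` be the right triangle with vertices `(a,0)`, `(a,b)`, `(1,0)` where
`0 ≤ a < 1` and `b > 0`. Then the average distance from the origin to the points
of `T` is strictly greater than `1/3`. -/
theorem right_triangle_avg_dist_gt_third (a b : ℝ) (ha0 : 0 ≤ a) (ha1 : a < 1) (hb : 0 < b)
    (T : Set (EuclideanSpace ℝ (Fin 2)))
    (hT : T = convexHull ℝ {!₂[a, 0], !₂[a, b], !₂[1, 0]}) :
    (1 : ℝ) / 3 < (∫ q in T, dist (0 : EuclideanSpace ℝ (Fin 2)) q) / (volume T).toReal := by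
  have he := measurePreserving_euclideanPlaneEquivProd
  have hT' : T = euclideanPlaneEquivProd ⁻¹' rightTriangle a b 1 := by
    rw [hT, ← convexHull_eq_rightTriangle ha1 hb, ← image_euclideanPlaneEquivProd_convexHull,
      preimage_image_eq _ euclideanPlaneEquivProd.injective]
  rw [hT', he.measure_preimage (isCompact_rightTriangle ha1 hb).measurableSet.nullMeasurableSet,
    ← measureReal_def]
  simp_rw [dist_zero_eq_sqrt]
  rw [he.setIntegral_preimage_emb euclideanPlaneEquivProd.toHomeomorph.measurableEmbedding
    (fun p : ℝ × ℝ => √(p.1 ^ 2 + p.2 ^ 2))]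
  calc (1 : ℝ) / 3 ≤ (2 * a + 1) / 3 := by linarith
    _ < _ := lt_setIntegral_sqrt_div_measureReal_rightTriangle ha1 hb
end

section
/- For every centrally symmetric convex body Q in the plane, μ*_Q ≤ (1/3)·Δ(Q). -/
open MeasureTheory Metric Real
open Set

/-! Take the centre of symmetry `c` as the candidate point. Symmetry puts `Q` inside the closed
ball of radius `r = Δ/2` about `c`, and convexity makes `Q` star-shaped about `c`. Shrinking `Q`
towards `c` by the factor `t / r` therefore lands in `Q ∩ B(c, t)`, so in dimension `n`
`|{q ∈ Q : ‖q - c‖ > t}| ≤ (1 - (t / r) ^ n) |Q|`. By the layer-cake formula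
`∫_Q ‖q - c‖ ≤ |Q| ∫₀^r (1 - (t / r) ^ n) dt = n / (n + 1) · r · |Q|`, which is `Δ/3 · |Q|`
for `n = 2`. -/

theorem integral_one_sub_div_pow (n : ℕ) (r : ℝ) :
    ∫ t in (0 : ℝ)..r, (1 - (t / r) ^ n) = n / (n + 1) * r := by
  rcases eq_or_ne r 0 with rfl | hr
  · simp
  rw [intervalIntegral.integral_comp_div (fun u => 1 - u ^ n) hr, zero_div, div_self hr,
    intervalIntegral.integral_sub intervalIntegrable_const
      (intervalIntegral.intervalIntegrable_pow n),
    intervalIntegral.integral_const, integral_pow, smul_eq_mul, smul_eq_mul]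
  field_simp
  ring

theorem setOf_lt_dist_eq_compl_closedBall {X : Type*} [PseudoMetricSpace X] (c : X) (t : ℝ) :
    {q | t < dist c q} = (closedBall c t)ᶜ := by
  ext q
  simp [dist_comm]

section StarConvex

variable {E : Type*} [NormedAddCommGroup E] [NormedSpace ℝ E] {Q : Set E} {c : E}

theorem Convex.starConvex_of_mapsTo_pointReflection (hQ : Convex ℝ Q)
    (hrefl : MapsTo (Equiv.pointReflection c) Q Q) : StarConvex ℝ c Q := fun q hq =>
  hQ.starConvex (hQ.mem_of_wbtw (wbtw_pointReflection ℝ c q) hq (hrefl hq)) hq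

theorem subset_closedBall_half_diam_of_mapsTo_pointReflection (hQ : Bornology.IsBounded Q)
    (hrefl : MapsTo (Equiv.pointReflection c) Q Q) : Q ⊆ closedBall c (diam Q / 2) := by
  intro q hq
  have hdiam := dist_le_diam_of_mem hQ (hrefl hq) hq
  rw [dist_pointReflection_right (𝕜 := ℝ), Real.norm_two] at hdiam
  rw [mem_closedBall']
  linarith

theorem StarConvex.image_homothety_subset_inter_closedBall (hQ : StarConvex ℝ c Q) {r s : ℝ}
    (hQr : Q ⊆ closedBall c r) (hs₀ : 0 ≤ s) (hs₁ : s ≤ 1) :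
    AffineMap.homothety c s '' Q ⊆ Q ∩ closedBall c (s * r) := by
  rintro _ ⟨q, hq, rfl⟩
  refine ⟨?_, ?_⟩
  · rw [AffineMap.homothety_apply, vsub_eq_sub, vadd_eq_add, add_comm]
    exact hQ.add_smul_sub_mem hq hs₀ hs₁
  · rw [mem_closedBall, dist_homothety_center, Real.norm_of_nonneg hs₀, dist_comm]
    exact mul_le_mul_of_nonneg_left (hQr hq) hs₀

variable [MeasurableSpace E] [BorelSpace E] [FiniteDimensional ℝ E]
  (μ : Measure E) [μ.IsAddHaarMeasure]

theorem StarConvex.pow_mul_measure_le_measure_inter_closedBall (hQ : StarConvex ℝ c Q)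
    {r t : ℝ} (hQr : Q ⊆ closedBall c r) (ht₀ : 0 < t) (htr : t ≤ r) :
    ENNReal.ofReal ((t / r) ^ Module.finrank ℝ E) * μ Q ≤ μ (Q ∩ closedBall c t) := by
  have hr : 0 < r := ht₀.trans_le htr
  have hs₀ : 0 ≤ t / r := by positivity
  calc ENNReal.ofReal ((t / r) ^ Module.finrank ℝ E) * μ Q
        = μ (AffineMap.homothety c (t / r) '' Q) := by
        rw [Measure.addHaar_image_homothety, abs_of_nonneg (by positivity)]
    _ ≤ μ (Q ∩ closedBall c t) := measure_mono <| by
        have hsub := hQ.image_homothety_subset_inter_closedBall hQr hs₀ ((div_le_one hr).2 htr)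
        rwa [div_mul_cancel₀ t hr.ne'] at hsub

theorem StarConvex.measureReal_restrict_lt_dist_le (hQ : StarConvex ℝ c Q) {r t : ℝ}
    (hQr : Q ⊆ closedBall c r) (ht₀ : 0 < t) (htr : t ≤ r) :
    (μ.restrict Q).real {q | t < dist c q} ≤
      (1 - (t / r) ^ Module.finrank ℝ E) * μ.real Q := by
  have hr : 0 < r := ht₀.trans_le htr
  have hQfin : μ Q ≠ ⊤ := measure_ne_top_of_subset hQr measure_closedBall_lt_top.ne
  have hinner : (t / r) ^ Module.finrank ℝ E * μ.real Q ≤ μ.real (Q ∩ closedBall c t) := by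
    have h := ENNReal.toReal_mono (measure_ne_top_of_subset inter_subset_left hQfin)
      (hQ.pow_mul_measure_le_measure_inter_closedBall μ hQr ht₀ htr)
    rwa [ENNReal.toReal_mul, ENNReal.toReal_ofReal (by positivity)] at h
  have hsplit := measureReal_inter_add_sdiff (μ := μ) (s := Q)
    (measurableSet_closedBall (x := c) (ε := t)) hQfin
  rw [setOf_lt_dist_eq_compl_closedBall, measureReal_restrict_apply measurableSet_closedBall.compl,
    inter_comm, ← sdiff_eq, sub_mul, one_mul]
  linarith

theorem StarConvex.setIntegral_dist_le (hQ : StarConvex ℝ c Q) {r : ℝ} (hr : 0 ≤ r)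
    (hQr : Q ⊆ closedBall c r) :
    ∫ q in Q, dist c q ∂μ ≤
      Module.finrank ℝ E / (Module.finrank ℝ E + 1) * r * μ.real Q := by
  have hdist : IntegrableOn (dist c ·) Q μ :=
    ((continuous_const.dist continuous_id).continuousOn.integrableOn_compact
      (isCompact_closedBall c r)).mono_set hQr
  have hvanish : ∀ t ∈ Ioi 0 \ Ioc 0 r, (μ.restrict Q).real {q | t < dist c q} = 0 := by
    rintro t ⟨ht₀, htr⟩
    have hQt : Q ⊆ closedBall c t :=
      hQr.trans (closedBall_subset_closedBall (not_le.1 fun h => htr ⟨ht₀, h⟩).le)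
    rw [setOf_lt_dist_eq_compl_closedBall, measureReal_restrict_apply
      measurableSet_closedBall.compl, (disjoint_compl_left_iff_subset.2 hQt).inter_eq,
      measureReal_empty]
  calc ∫ q in Q, dist c q ∂μ
      = ∫ t in Ioi 0, (μ.restrict Q).real {q | t < dist c q} :=
        hdist.integral_eq_integral_meas_lt (ae_of_all _ fun _ => dist_nonneg)
    _ = ∫ t in Ioc 0 r, (μ.restrict Q).real {q | t < dist c q} :=
        setIntegral_eq_of_subset_of_forall_sdiff_eq_zero measurableSet_Ioi Ioc_subset_Ioi_self
          hvanish
    _ ≤ ∫ t in Ioc 0 r, (1 - (t / r) ^ Module.finrank ℝ E) * μ.real Q := by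
        refine integral_mono_of_nonneg (ae_of_all _ fun _ => measureReal_nonneg)
          (Continuous.integrableOn_Ioc (by fun_prop)) ?_
        exact (ae_restrict_iff' measurableSet_Ioc).2 (ae_of_all _ fun t ht =>
          hQ.measureReal_restrict_lt_dist_le μ hQr ht.1 ht.2)
    _ = Module.finrank ℝ E / (Module.finrank ℝ E + 1) * r * μ.real Q := by
        rw [← intervalIntegral.integral_of_le hr, intervalIntegral.integral_mul_const,
          integral_one_sub_div_pow]

end StarConvex

theorem fermat_weber_upper_bound_symmetric_general (Q : Set (EuclideanSpace ℝ (Fin 2)))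
    (hQc : IsCompact Q) (hQconv : Convex ℝ Q)
    (c : EuclideanSpace ℝ (Fin 2)) (hsym : (fun p => 2 • c - p) '' Q = Q) :
    (⨅ p : EuclideanSpace ℝ (Fin 2), (∫ q in Q, dist p q) / (volume Q).toReal) ≤
      (1 : ℝ) / 3 * Metric.diam Q := by
  have hrefl : MapsTo (Equiv.pointReflection c) Q Q := by
    intro q hq
    rw [← hsym]
    exact ⟨q, hq, by
      simp only [Equiv.pointReflection_apply, vsub_eq_sub, vadd_eq_add, two_nsmul]; abel⟩
  have hball := subset_closedBall_half_diam_of_mapsTo_pointReflection hQc.isBounded hrefl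
  have hmean := (hQconv.starConvex_of_mapsTo_pointReflection hrefl).setIntegral_dist_le volume
    (by positivity) hball
  rw [finrank_euclideanSpace_fin] at hmean
  refine (ciInf_le ⟨0, ?_⟩ c).trans (div_le_of_le_mul₀ ENNReal.toReal_nonneg (by positivity) ?_)
  · rintro _ ⟨p, rfl⟩
    exact div_nonneg (integral_nonneg fun _ => dist_nonneg) ENNReal.toReal_nonneg
  · calc ∫ q in Q, dist c q ≤ 2 / (2 + 1) * (diam Q / 2) * volume.real Q := mod_cast hmean
      _ = 1 / 3 * diam Q * (volume Q).toReal := by rw [measureReal_def]; ring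

/-- For every centrally symmetric convex body `Q` in the plane (symmetric about a
point `c`, i.e. reflection through `c` maps `Q` onto itself),
`μ*_Q ≤ (1/3)·Δ(Q)`. -/
theorem fermat_weber_upper_bound_symmetric (Q : Set (EuclideanSpace ℝ (Fin 2)))
    (hQc : IsCompact Q) (hQconv : Convex ℝ Q) (hQint : (interior Q).Nonempty)
    (c : EuclideanSpace ℝ (Fin 2)) (hsym : (fun p => 2 • c - p) '' Q = Q) :
    (⨅ p : EuclideanSpace ℝ (Fin 2), (∫ q in Q, dist p q) / (volume Q).toReal) ≤
      (1 : ℝ) / 3 * Metric.diam Q :=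
  fermat_weber_upper_bound_symmetric_general Q hQc hQconv c hsym
end

section
/- (Jung's theorem in the plane) Every planar set S of diameter Δ(S) is contained in a closed disk of radius Δ(S)/√3. -/
/-!
By Helly's theorem in the plane, the closed disks of radius `Δ(S) / √3` centred at the points
of `S` have a common point as soon as any three of them do. For three points at mutual distance
at most `Δ`, the midpoint of the longest side is such a point if the triangle is not acute;
otherwise the circumcenter is, since the largest angle `α` lies in `[π/3, π/2)` and so the
circumradius `a / (2 sin α)` is at most `Δ / √3`.
-/

open Metric Real
open scoped RealInnerProductSpace Finset

lemma circumradius_sq_bound_of_le {A B W δ : ℝ} (hW : 0 < W) (hWA : W < A) (hWB : W < B)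
    (hBA : B ≤ A) (hB : B ≤ 2 * W) (hA : A ≤ δ) :
    3 * A * B * (A + B - 2 * W) ≤ 4 * δ * (A * B - W ^ 2) := by
  have hG : 0 < A * B - W ^ 2 := by nlinarith [mul_lt_mul'' hWA hWB hW.le hW.le]
  nlinarith [mul_nonneg (mul_nonneg (hW.trans hWA).le (sub_nonneg.2 hBA)) (hW.trans hWB).le,
    mul_nonneg (mul_nonneg (hW.trans hWA).le (sub_pos.2 hWB).le) (sub_nonneg.2 hB),
    mul_le_mul_of_nonneg_right hA hG.le]

/-- With `A = ‖u‖²`, `B = ‖v‖²`, `W = ⟪u, v⟫`, the squared circumradius of the triangle `0, u, v`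
is `A B ‖u - v‖² / (4 (A B - W²))`, and the triangle is acute iff `0 < W < min A B`. -/
lemma circumradius_sq_bound {A B W δ : ℝ} (hW : 0 < W) (hWA : W < A) (hWB : W < B)
    (hA : A ≤ δ) (hB : B ≤ δ) (hAB : A + B - 2 * W ≤ δ) :
    3 * A * B * (A + B - 2 * W) ≤ 4 * δ * (A * B - W ^ 2) := by
  rcases le_total (2 * W) A with h₁ | h₁ <;> rcases le_total (2 * W) B with h₂ | h₂
  · have hG : 0 < A * B - W ^ 2 := by nlinarith [mul_lt_mul'' hWA hWB hW.le hW.le]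
    nlinarith [mul_nonneg (sub_nonneg.2 h₁) (sub_nonneg.2 h₂), mul_le_mul_of_nonneg_right hAB hG.le]
  · exact circumradius_sq_bound_of_le hW hWA hWB (by linarith) h₂ hA
  · linarith [circumradius_sq_bound_of_le hW hWB hWA (by linarith) h₁ hB]
  · rcases le_total A B with h | h
    · linarith [circumradius_sq_bound_of_le hW hWB hWA h h₁ hB]
    · exact circumradius_sq_bound_of_le hW hWA hWB h h₂ hA

/-- For `q s t = ‖s • u + t • v‖²`, the three values are the squared distances from
`s • u + t • v` to the vertices `0, u, v`. -/
lemma exists_quadratic_form_le_div_three {A B W δ : ℝ} (q : ℝ → ℝ → ℝ)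
    (hq : ∀ s t, q s t = s ^ 2 * A + 2 * s * t * W + t ^ 2 * B) (hδ : 0 ≤ δ)
    (hA : A ≤ δ) (hB : B ≤ δ) (hAB : A + B - 2 * W ≤ δ) :
    ∃ s t, q s t ≤ δ / 3 ∧ q (s - 1) t ≤ δ / 3 ∧ q s (t - 1) ≤ δ / 3 := by
  by_cases hW : W ≤ 0
  · refine ⟨1 / 2, 1 / 2, ?_, ?_, ?_⟩ <;> rw [hq] <;> linarith
  by_cases hWA : A ≤ W
  · refine ⟨0, 1 / 2, ?_, ?_, ?_⟩ <;> rw [hq] <;> linarith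
  by_cases hWB : B ≤ W
  · refine ⟨1 / 2, 0, ?_, ?_, ?_⟩ <;> rw [hq] <;> linarith
  push Not at hW hWA hWB
  set G := A * B - W ^ 2 with hG_def
  have hG : 0 < G := by nlinarith [mul_lt_mul'' hWA hWB hW.le hW.le]
  have hR : A * B * (A + B - 2 * W) / (4 * G) ≤ δ / 3 := by
    rw [div_le_div_iff₀ (by positivity) (by norm_num)]
    linarith [circumradius_sq_bound hW hWA hWB hA hB hAB]
  clear_value G
  refine ⟨B * (A - W) / (2 * G), A * (B - W) / (2 * G), ?_, ?_, ?_⟩ <;>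
  · refine le_of_eq_of_le ?_ hR
    rw [hq]
    field_simp
    rw [hG_def]
    ring

lemma Finset.exists_eq_triple_of_card_le_three {α : Type*} [DecidableEq α] {s : Finset α}
    (hs : s.Nonempty) (h : #s ≤ 3) : ∃ a b c, s = {a, b, c} := by
  have h₀ : 1 ≤ #s := hs.card_pos
  interval_cases hcard : #s
  · obtain ⟨a, rfl⟩ := card_eq_one.1 hcard
    exact ⟨a, a, a, by simp⟩
  · obtain ⟨a, b, -, rfl⟩ := card_eq_two.1 hcard
    exact ⟨a, a, b, by simp⟩
  · obtain ⟨a, b, c, -, -, -, rfl⟩ := card_eq_three.1 hcard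
    exact ⟨a, b, c, rfl⟩

section InnerProductSpace

variable {V : Type*} [NormedAddCommGroup V] [InnerProductSpace ℝ V]

lemma norm_smul_add_smul_sq (u v : V) (s t : ℝ) :
    ‖s • u + t • v‖ ^ 2 = s ^ 2 * ‖u‖ ^ 2 + 2 * s * t * ⟪u, v⟫ + t ^ 2 * ‖v‖ ^ 2 := by
  rw [norm_add_sq_real, norm_smul, norm_smul, real_inner_smul_left, real_inner_smul_right,
    mul_pow, mul_pow, Real.norm_eq_abs, Real.norm_eq_abs, sq_abs, sq_abs]
  ring

lemma le_div_sqrt_three_iff {x d : ℝ} (hx : 0 ≤ x) (hd : 0 ≤ d) :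
    x ≤ d / √3 ↔ x ^ 2 ≤ d ^ 2 / 3 := by
  rw [← Real.sqrt_sq hd, ← Real.sqrt_div' _ (by norm_num), Real.sqrt_sq hd,
    Real.le_sqrt hx (by positivity)]

theorem exists_dist_le_div_sqrt_three (p₁ p₂ p₃ : V) {d : ℝ} (h₁₂ : dist p₁ p₂ ≤ d)
    (h₁₃ : dist p₁ p₃ ≤ d) (h₂₃ : dist p₂ p₃ ≤ d) :
    ∃ c, dist c p₁ ≤ d / √3 ∧ dist c p₂ ≤ d / √3 ∧ dist c p₃ ≤ d / √3 := by
  have hd : 0 ≤ d := dist_nonneg.trans h₁₂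
  have hsq {x y : V} (h : dist x y ≤ d) : ‖x - y‖ ^ 2 ≤ d ^ 2 := by
    rw [← dist_eq_norm]; gcongr
  obtain ⟨s, t, h₁, h₂, h₃⟩ := exists_quadratic_form_le_div_three
    (fun s t => ‖s • (p₂ - p₁) + t • (p₃ - p₁)‖ ^ 2) (norm_smul_add_smul_sq _ _) (sq_nonneg d)
    (by simpa [norm_sub_rev] using hsq h₁₂) (by simpa [norm_sub_rev] using hsq h₁₃)
    (by have := hsq h₂₃
        rw [← sub_sub_sub_cancel_right p₂ p₃ p₁, norm_sub_sq_real] at this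
        linarith)
  refine ⟨p₁ + (s • (p₂ - p₁) + t • (p₃ - p₁)), ?_, ?_, ?_⟩ <;>
    rw [le_div_sqrt_three_iff dist_nonneg hd, dist_eq_norm]
  · simpa using h₁
  · convert h₂ using 2; congr 1; module
  · convert h₃ using 2; congr 1; module

lemma biInter_closedBall_nonempty_of_card_le_three {ι : Type*} (p : ι → V) {I : Finset ι}
    (hI : #I ≤ 3) {d : ℝ} (hd : ∀ i ∈ I, ∀ j ∈ I, dist (p i) (p j) ≤ d) :
    (⋂ i ∈ I, closedBall (p i) (d / √3)).Nonempty := by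
  classical
  rcases I.eq_empty_or_nonempty with rfl | hne
  · simp
  obtain ⟨a, b, c, rfl⟩ := Finset.exists_eq_triple_of_card_le_three hne hI
  obtain ⟨x, ha, hb, hc⟩ := exists_dist_le_div_sqrt_three (p a) (p b) (p c)
    (hd a (by simp) b (by simp)) (hd a (by simp) c (by simp)) (hd b (by simp) c (by simp))
  exact ⟨x, by simp [ha, hb, hc]⟩

theorem exists_subset_closedBall_diam_div_sqrt_three [FiniteDimensional ℝ V]
    (hV : Module.finrank ℝ V ≤ 2) {S : Set V} (hS : Bornology.IsBounded S) :
    ∃ c, S ⊆ closedBall c (diam S / √3) := by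
  obtain ⟨c, hc⟩ := Convex.helly_theorem_compact' (𝕜 := ℝ)
    (F := fun x : S => closedBall (x : V) (diam S / √3)) (fun _ => convex_closedBall _ _)
    (fun _ => isCompact_closedBall _ _) fun I hI =>
      biInter_closedBall_nonempty_of_card_le_three _ (by omega)
        fun i _ j _ => dist_le_diam_of_mem hS i.2 j.2
  exact ⟨c, fun x hx => mem_closedBall_comm.1 (Set.mem_iInter.1 hc ⟨x, hx⟩)⟩

end InnerProductSpace

/-- Jung's theorem in the plane: every bounded planar set `S` is contained in a closed
disk of radius `Δ(S)/√3`. -/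
theorem jung_plane (S : Set (EuclideanSpace ℝ (Fin 2))) (hS : Bornology.IsBounded S) :
    ∃ c : EuclideanSpace ℝ (Fin 2), S ⊆ Metric.closedBall c (Metric.diam S / Real.sqrt 3) :=
  exists_subset_closedBall_diam_div_sqrt_three finrank_euclideanSpace_fin.le hS
end

section
/- Let Q be a convex body in the plane with diameter D, and let Ω be its smallest enclosing disk with center o and radius R. If r is the radius of the largest disk centered at o contained in Q, then r ≥ √(R² − D²/4). -/
/-!
Suppose a point `x` with `‖x - o‖ ≤ s = √(R² - D²/4)` lies outside `Q`. Separating it from `Q`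
gives a unit vector `u` and `t < s` with `⟪u, y - o⟫ < t` on `Q`. By minimality of the enclosing
disk, every closed half-plane through `o` contains a point of `Q` on the circle `‖y - o‖ = R`
(in particular `t > 0`). In an orthonormal frame `(u, v)` the chord `⟪u, · - o⟫ = t` has endpoints
`(t, ±m)` with `m = √(R² - t²)`. The half-planes bounded by the diameters through these endpoints
contain points `z`, `q` of `Q` on the circle which avoid the cap beyond the chord, so their
`v`-coordinates are `≥ m` and `≤ -m`. Hence `D ≥ ‖z - q‖ ≥ 2m > 2√(R² - s²) = D`.
-/

open Filter Metric Module Real Topology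
open scoped RealInnerProductSpace

/-- `(a, b)` and `(t, m)` lie on one circle about the origin; if `(a, b)` avoids the cap `a ≥ t`
and lies on the side of the diameter through `(t, -m)` that contains `(t, m)`, then it lies on the
arc from `(t, m)` to `(-t, m)`. -/
theorem le_of_lt_of_sq_add_sq_eq {a b t m : ℝ} (ha : a < t) (h : a ^ 2 + b ^ 2 = t ^ 2 + m ^ 2)
    (hab : 0 ≤ m * a + t * b) : m ≤ b := by
  have key : 2 * (t - a) * (m * a + t * b) = -(m - b) * ((m + b) ^ 2 + (t - a) ^ 2) := by
    linear_combination -(m + b) * h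
  by_contra! hbm
  have hpos : 0 < (m - b) * ((m + b) ^ 2 + (t - a) ^ 2) :=
    mul_pos (sub_pos.2 hbm) (add_pos_of_nonneg_of_pos (sq_nonneg _) (pow_pos (sub_pos.2 ha) 2))
  linarith [mul_nonneg (sub_pos.2 ha).le hab]

structure IsMinimalEnclosingBall {X : Type*} [PseudoMetricSpace X] (Q : Set X) (o : X) (R : ℝ) :
    Prop where
  subset : Q ⊆ closedBall o R
  le_radius : ∀ o' R', Q ⊆ closedBall o' R' → R ≤ R'

namespace IsMinimalEnclosingBall

variable {X : Type*} [PseudoMetricSpace X] {Q : Set X} {o : X} {R : ℝ}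

theorem nonempty (h : IsMinimalEnclosingBall Q o R) : Q.Nonempty := by
  by_contra hQ
  have := h.le_radius o (R - 1) (by simp [Set.not_nonempty_iff_eq_empty.1 hQ])
  linarith

theorem exists_le_dist (h : IsMinimalEnclosingBall Q o R) (hQ : IsCompact Q) (c : X) :
    ∃ y ∈ Q, R ≤ dist y c := by
  obtain ⟨y, hyQ, hy⟩ :=
    hQ.exists_isMaxOn h.nonempty (continuous_id.dist continuous_const).continuousOn
  exact ⟨y, hyQ, h.le_radius c _ fun y' hy' => mem_closedBall.2 (hy hy')⟩

end IsMinimalEnclosingBall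

section InnerProductSpace

variable {E : Type*} [NormedAddCommGroup E] [InnerProductSpace ℝ E]

theorem inner_sub_le_of_dist_le_dist_add_smul {y o w : E} {ε : ℝ} (hε : 0 < ε)
    (h : dist y o ≤ dist y (o + ε • w)) : ⟪w, y - o⟫ ≤ ε * ‖w‖ ^ 2 / 2 := by
  have hsq := pow_le_pow_left₀ dist_nonneg h 2
  rw [dist_eq_norm, dist_eq_norm, show y - (o + ε • w) = (y - o) - ε • w by abel,
    norm_sub_sq_real (y - o), real_inner_smul_right, norm_smul, Real.norm_eq_abs, abs_of_pos hε,
    real_inner_comm] at hsq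
  nlinarith

theorem exists_norm_eq_one_inner_sub_lt_of_notMem [CompleteSpace E] {Q : Set E}
    (hconv : Convex ℝ Q) (hclosed : IsClosed Q) (hne : Q.Nonempty) (o : E) {x : E} (hx : x ∉ Q) :
    ∃ u : E, ‖u‖ = 1 ∧ ∃ t, (∀ y ∈ Q, ⟪u, y - o⟫ < t) ∧ t < ⟪u, x - o⟫ := by
  obtain ⟨f, c, hfQ, hfx⟩ := geometric_hahn_banach_closed_point hconv hclosed hx
  set g := (InnerProductSpace.toDual ℝ E).symm f
  have hg : ∀ y, ⟪g, y⟫ = f y := fun y => InnerProductSpace.toDual_symm_apply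
  have hg0 : g ≠ 0 := by
    rintro hg0
    obtain ⟨y, hy⟩ := hne
    have := (hfQ y hy).trans hfx
    rw [← hg, ← hg, hg0, inner_zero_left, inner_zero_left] at this
    exact lt_irrefl 0 this
  refine ⟨‖g‖⁻¹ • g, norm_smul_inv_norm hg0, ‖g‖⁻¹ * (c - f o), fun y hy => ?_, ?_⟩
  · rw [real_inner_smul_left, inner_sub_right, hg, hg]
    gcongr
    linarith [hfQ y hy]
  · rw [real_inner_smul_left, inner_sub_right, hg, hg]
    gcongr

theorem exists_inner_sq_add_inner_sq_eq_norm_sq [Fact (finrank ℝ E = 2)] {u : E} (hu : ‖u‖ = 1) :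
    ∃ v : E, ∀ p, ⟪u, p⟫ ^ 2 + ⟪v, p⟫ ^ 2 = ‖p‖ ^ 2 := by
  have : FiniteDimensional ℝ E := .of_fact_finrank_eq_two
  let 𝔬 : Orientation ℝ E (Fin 2) := (finBasisOfFinrankEq ℝ E Fact.out).orientation
  refine ⟨𝔬.rightAngleRotation u, fun p => ?_⟩
  rw [𝔬.inner_rightAngleRotation_left, 𝔬.inner_sq_add_areaForm_sq, hu, one_pow, one_mul]

namespace IsMinimalEnclosingBall

variable {Q : Set E} {o : E} {R : ℝ}

/-- Take a limit point of farthest points of `Q` from the centers `o + ε • w`, `ε → 0⁺`. -/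
theorem exists_dist_eq_inner_nonpos (h : IsMinimalEnclosingBall Q o R) (hQ : IsCompact Q)
    (w : E) : ∃ y ∈ Q, dist y o = R ∧ ⟪w, y - o⟫ ≤ 0 := by
  set ε : ℕ → ℝ := fun n => 1 / (n + 1)
  have hε : ∀ n, 0 < ε n := fun n => Nat.one_div_pos_of_nat
  choose y hyQ hy using fun n => h.exists_le_dist hQ (o + ε n • w)
  obtain ⟨a, haQ, φ, hφ, hya⟩ := hQ.tendsto_subseq hyQ
  have hεφ : Tendsto (ε ∘ φ) atTop (𝓝 0) :=
    tendsto_one_div_add_atTop_nhds_zero_nat.comp hφ.tendsto_atTop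
  refine ⟨a, haQ, le_antisymm (h.subset haQ) ?_, ?_⟩
  · have hc : Tendsto (fun n => o + ε (φ n) • w) atTop (𝓝 o) := by
      simpa using tendsto_const_nhds.add (hεφ.smul_const w)
    exact ge_of_tendsto (hya.dist hc) (Eventually.of_forall fun n => hy (φ n))
  · have hin : ∀ n, ⟪w, y n - o⟫ ≤ ε n * ‖w‖ ^ 2 / 2 := fun n =>
      inner_sub_le_of_dist_le_dist_add_smul (hε n) ((h.subset (hyQ n)).trans (hy n))
    have hlim : Tendsto (fun n => ε (φ n) * ‖w‖ ^ 2 / 2) atTop (𝓝 0) := by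
      simpa using (hεφ.mul_const (‖w‖ ^ 2)).div_const 2
    have hcont : Continuous fun y : E => ⟪w, y - o⟫ :=
      continuous_const.inner (continuous_id.sub continuous_const)
    exact le_of_tendsto_of_tendsto' ((hcont.tendsto a).comp hya) hlim fun n => hin (φ n)

/-- The half-plane used is bounded by the diameter through `o + t • u - m • v`. -/
theorem exists_le_inner_of_forall_inner_lt (h : IsMinimalEnclosingBall Q o R) (hQ : IsCompact Q)
    {u v : E} (huv : ∀ p, ⟪u, p⟫ ^ 2 + ⟪v, p⟫ ^ 2 = ‖p‖ ^ 2) {t m : ℝ}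
    (htm : t ^ 2 + m ^ 2 = R ^ 2) (hQt : ∀ y ∈ Q, ⟪u, y - o⟫ < t) : ∃ z ∈ Q, m ≤ ⟪v, z - o⟫ := by
  obtain ⟨z, hzQ, hzR, hz⟩ := h.exists_dist_eq_inner_nonpos hQ (-(m • u + t • v))
  refine ⟨z, hzQ, le_of_lt_of_sq_add_sq_eq (hQt z hzQ) ?_ ?_⟩
  · rw [huv, ← dist_eq_norm, hzR, htm]
  · simp only [inner_neg_left, inner_add_left, real_inner_smul_left] at hz
    linarith

theorem exists_two_mul_le_dist (h : IsMinimalEnclosingBall Q o R) (hQ : IsCompact Q) {u v : E}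
    (huv : ∀ p, ⟪u, p⟫ ^ 2 + ⟪v, p⟫ ^ 2 = ‖p‖ ^ 2) {t m : ℝ} (htm : t ^ 2 + m ^ 2 = R ^ 2)
    (hQt : ∀ y ∈ Q, ⟪u, y - o⟫ < t) : ∃ z ∈ Q, ∃ q ∈ Q, 2 * m ≤ dist z q := by
  obtain ⟨z, hzQ, hz⟩ := h.exists_le_inner_of_forall_inner_lt hQ huv htm hQt
  obtain ⟨q, hqQ, hq⟩ := h.exists_le_inner_of_forall_inner_lt hQ (v := -v)
    (by simpa only [inner_neg_left, neg_sq] using huv) htm hQt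
  have hzq : 2 * m ≤ ⟪v, z - q⟫ := by
    rw [show z - q = (z - o) - (q - o) by abel, inner_sub_right]
    rw [inner_neg_left] at hq
    linarith
  have hv : ⟪v, z - q⟫ ^ 2 ≤ ‖z - q‖ ^ 2 := by linarith [huv (z - q), sq_nonneg ⟪u, z - q⟫]
  exact ⟨z, hzQ, q, hqQ, hzq.trans <| dist_eq_norm z q ▸
    (le_abs_self _).trans (abs_le_of_sq_le_sq hv (norm_nonneg _))⟩

end IsMinimalEnclosingBall

end InnerProductSpace

theorem inradius_at_circumcenter_general (Q : Set (EuclideanSpace ℝ (Fin 2)))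
    (hQc : IsCompact Q) (hQconv : Convex ℝ Q)
    (D : ℝ) (hD : D = Metric.diam Q)
    (o : EuclideanSpace ℝ (Fin 2)) (R : ℝ)
    (henc : Q ⊆ Metric.closedBall o R)
    (hmin : ∀ (o' : EuclideanSpace ℝ (Fin 2)) (R' : ℝ), Q ⊆ Metric.closedBall o' R' → R ≤ R') :
    Metric.closedBall o (Real.sqrt (R ^ 2 - D ^ 2 / 4)) ⊆ Q := by
  have hΩ : IsMinimalEnclosingBall Q o R := ⟨henc, hmin⟩
  have : Fact (finrank ℝ (EuclideanSpace ℝ (Fin 2)) = 2) := ⟨finrank_euclideanSpace_fin⟩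
  set s := √(R ^ 2 - D ^ 2 / 4)
  intro x hx
  by_contra hxQ
  obtain ⟨u, hu, t, hQt, htx⟩ :=
    exists_norm_eq_one_inner_sub_lt_of_notMem hQconv hQc.isClosed hΩ.nonempty o hxQ
  have hts : t < s := htx.trans_le <| (real_inner_le_norm u _).trans <| by
    rw [hu, one_mul, ← dist_eq_norm]; exact mem_closedBall.1 hx
  obtain ⟨z₀, hz₀Q, -, hz₀⟩ := hΩ.exists_dist_eq_inner_nonpos hQc (-u)
  have ht : 0 < t := by
    rw [inner_neg_left, neg_nonpos] at hz₀
    exact hz₀.trans_lt (hQt z₀ hz₀Q)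
  have hts2 : t ^ 2 < s ^ 2 := pow_lt_pow_left₀ hts ht.le two_ne_zero
  have hs2 : s ^ 2 = R ^ 2 - D ^ 2 / 4 := sq_sqrt (sqrt_pos.1 (ht.trans hts)).le
  set m := √(R ^ 2 - t ^ 2)
  have htm : t ^ 2 + m ^ 2 = R ^ 2 := by
    rw [sq_sqrt (by linarith [sq_nonneg D])]; ring
  obtain ⟨v, huv⟩ := exists_inner_sq_add_inner_sq_eq_norm_sq hu
  obtain ⟨z, hzQ, q, hqQ, hzq⟩ := hΩ.exists_two_mul_le_dist hQc huv htm hQt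
  have h2m : 2 * m ≤ D := hzq.trans (hD ▸ dist_le_diam_of_mem hQc.isBounded hzQ hqQ)
  have := pow_le_pow_left₀ (by positivity) h2m 2
  linarith

/-- Let `Q` be a convex body in the plane with diameter `D`, and let the closed disk of
center `o` and radius `R` be its smallest enclosing disk. Then the closed disk centered
at `o` of radius `√(R² − D²/4)` is contained in `Q`; that is, the radius `r` of the
largest disk centered at `o` contained in `Q` satisfies `r ≥ √(R² − D²/4)`. -/
theorem inradius_at_circumcenter (Q : Set (EuclideanSpace ℝ (Fin 2)))
    (hQc : IsCompact Q) (hQconv : Convex ℝ Q) (hQint : (interior Q).Nonempty)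
    (D : ℝ) (hD : D = Metric.diam Q)
    (o : EuclideanSpace ℝ (Fin 2)) (R : ℝ)
    (henc : Q ⊆ Metric.closedBall o R)
    (hmin : ∀ (o' : EuclideanSpace ℝ (Fin 2)) (R' : ℝ), Q ⊆ Metric.closedBall o' R' → R ≤ R') :
    Metric.closedBall o (Real.sqrt (R ^ 2 - D ^ 2 / 4)) ⊆ Q :=
  inradius_at_circumcenter_general Q hQc hQconv D hD o R henc hmin
end

section
/- Define f(x,y) = (2/3)·(x³+y³)/(x²+y²). Subject to the constraints √(R² − D²/4) ≤ y ≤ x ≤ R ≤ D/√3 and x + y ≤ D (for some R, with D > 0 fixed), one has f(x,y) ≤ (2(4−√3)/13)·D. -/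
/-!
In the coordinates `u = x + y`, `d = x - y` one has `f(x,y) = u (u² + 3d²) / (3 (u² + d²))`, so the
claim is `13u³ + 39ud² ≤ (24 - 6√3) D (u² + d²)`. The two sides differ by
`u² ((24 - 6√3) D - 13u) + d² ((24 - 6√3) D - 39u)`, which is nonnegative outright when
`39u ≤ (24 - 6√3) D` and otherwise decreases in `d`, so it suffices to check it at the largest
admissible `d`. For `u ≥ √3 D / 2` that is `√3 d = 2D - √3 u` (the constraint `x ≤ D/√3`), where the
difference is a nonnegative multiple of `D - u`, vanishing at the extremal point `x = D/√3`,
`x + y = D`. For `u ≤ √3 D / 2` it is `d u = D² / 4` (the constraint `x² - y² ≤ D² / 4`), which leaves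
a one-variable quintic in `u / D` with enough slack to round `√3` to rationals.
-/

open Real

lemma quintic_nonneg {t : ℝ} (ht : 0 ≤ t) (ht' : 173 * t ≤ 150) :
    0 ≤ 16 * t ^ 4 * (68 / 5 - 13 * t) + (68 / 5 - 39 * t) := by
  nlinarith [mul_nonneg ht (sub_nonneg.2 ht'), mul_nonneg (mul_nonneg ht ht) (sub_nonneg.2 ht'),
    sq_nonneg (t - 1 / 2), sq_nonneg (t ^ 2 - 1 / 4)]

lemma quintic_nonneg_homogeneous {u D : ℝ} (hu : 0 ≤ u) (hD : 0 < D) (huD : 173 * u ≤ 150 * D) :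
    0 ≤ 16 * u ^ 4 * (68 / 5 * D - 13 * u) + D ^ 4 * (68 / 5 * D - 39 * u) := by
  have hscaled := quintic_nonneg (div_nonneg hu hD.le) (by rwa [mul_div_assoc', div_le_iff₀ hD])
  have hscale : 16 * u ^ 4 * (68 / 5 * D - 13 * u) + D ^ 4 * (68 / 5 * D - 39 * u)
      = D ^ 5 * (16 * (u / D) ^ 4 * (68 / 5 - 13 * (u / D)) + (68 / 5 - 39 * (u / D))) := by
    field_simp
  rw [hscale]
  positivity

lemma sqrt_three_bounds : 173 / 100 < √3 ∧ √3 ≤ 26 / 15 := by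
  constructor
  · rw [lt_sqrt (by norm_num)]; norm_num
  · rw [sqrt_le_left (by norm_num)]; norm_num

section SumDiff

variable {u d D : ℝ}

lemma sum_diff_bound_of_large_sum (hd : 0 ≤ d) (huD : u ≤ D)
    (hlarge : (24 - 6 * √3) * D ≤ 39 * u) (hsum : 3 * D ≤ 2 * √3 * u)
    (hx : √3 * (u + d) ≤ 2 * D) :
    13 * u ^ 3 + 39 * u * d ^ 2 ≤ (24 - 6 * √3) * D * (u ^ 2 + d ^ 2) := by
  have hs : √3 ^ 2 = 3 := sq_sqrt (by norm_num)
  obtain ⟨hs₁, hs₂⟩ := sqrt_three_bounds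
  have hd_max : 3 * d ^ 2 ≤ (2 * D - √3 * u) ^ 2 :=
    calc 3 * d ^ 2 = (√3 * d) ^ 2 := by rw [mul_pow, hs]
      _ ≤ (2 * D - √3 * u) ^ 2 := pow_le_pow_left₀ (by positivity) (by linarith) 2
  have hQ : 0 ≤ 13 * (2 * √3 * u - 3 * D) ^ 2 + (2 * √3 + 18) * D * (2 * √3 * u - 3 * D)
      + (33 - 18 * √3) * D ^ 2 := by
    have hD : 0 ≤ D := by nlinarith
    have := mul_nonneg (mul_nonneg (by linarith : (0 : ℝ) ≤ 2 * √3 + 18) hD) (sub_nonneg.2 hsum)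
    nlinarith [sq_nonneg (2 * √3 * u - 3 * D), sq_nonneg D]
  linear_combination (1 / 3) * mul_nonneg (sub_nonneg.2 huD) hQ
    + (1 / 3) * mul_nonneg (sub_nonneg.2 hd_max) (sub_nonneg.2 hlarge)
    - (1 / 3) * (20 * u * D ^ 2 - 24 * u ^ 2 * D - 6 * u ^ 2 * D * √3 + 13 * u ^ 3) * hs

lemma sum_diff_bound_of_small_sum (hd : 0 ≤ d) (hD : 0 < D)
    (hlarge : (24 - 6 * √3) * D ≤ 39 * u) (hsum : 2 * √3 * u ≤ 3 * D)
    (hdu : d * u ≤ D ^ 2 / 4) :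
    13 * u ^ 3 + 39 * u * d ^ 2 ≤ (24 - 6 * √3) * D * (u ^ 2 + d ^ 2) := by
  obtain ⟨hs₁, hs₂⟩ := sqrt_three_bounds
  have hu : 0 < u := by nlinarith
  have hdu₂ : 16 * u ^ 2 * d ^ 2 ≤ D ^ 4 := by
    nlinarith [pow_le_pow_left₀ (by positivity) hdu 2]
  have hquintic := quintic_nonneg_homogeneous hu.le hD (by nlinarith)
  have hgap : 0 ≤ 16 * u ^ 2 *
      ((24 - 6 * √3) * D * (u ^ 2 + d ^ 2) - (13 * u ^ 3 + 39 * u * d ^ 2)) := by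
    linear_combination hquintic
      + mul_le_mul_of_nonneg_right hdu₂ (sub_nonneg.2 hlarge)
      + mul_nonneg (by positivity : 0 ≤ (16 * u ^ 4 + D ^ 4) * D) (by linarith : 0 ≤ 52 / 5 - 6 * √3)
  linarith [(mul_nonneg_iff_of_pos_left (by positivity)).1 hgap]

lemma sum_diff_bound (hu : 0 ≤ u) (hd : 0 ≤ d) (hD : 0 < D) (huD : u ≤ D)
    (hdu : d * u ≤ D ^ 2 / 4) (hx : √3 * (u + d) ≤ 2 * D) :
    13 * u ^ 3 + 39 * u * d ^ 2 ≤ (24 - 6 * √3) * D * (u ^ 2 + d ^ 2) := by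
  obtain ⟨hs₁, hs₂⟩ := sqrt_three_bounds
  rcases le_total (39 * u) ((24 - 6 * √3) * D) with hsmall | hlarge
  · nlinarith [mul_nonneg (sq_nonneg d) (sub_nonneg.2 hsmall), mul_nonneg (sq_nonneg u) hu]
  rcases le_total (3 * D) (2 * √3 * u) with hsum | hsum
  · exact sum_diff_bound_of_large_sum hd huD hlarge hsum hx
  · exact sum_diff_bound_of_small_sum hd hD hlarge hsum hdu

end SumDiff

lemma sum_cubes_le {x y D : ℝ} (hy : 0 ≤ y) (hyx : y ≤ x) (hD : 0 < D) (hx : √3 * x ≤ D)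
    (hxy : x + y ≤ D) (hsq : x ^ 2 - y ^ 2 ≤ D ^ 2 / 4) :
    13 * (x ^ 3 + y ^ 3) ≤ 3 * (4 - √3) * D * (x ^ 2 + y ^ 2) := by
  have := sum_diff_bound (u := x + y) (d := x - y) (D := D) (by linarith) (by linarith) hD hxy
    (by nlinarith) (by linarith)
  linear_combination this / 4

theorem f_upper_bound_general (x y R D : ℝ) (hD : 0 < D) (hy : 0 < y)
    (h1 : Real.sqrt (R ^ 2 - D ^ 2 / 4) ≤ y) (h2 : y ≤ x) (h3 : x ≤ R)
    (h4 : R ≤ D / Real.sqrt 3) (h5 : x + y ≤ D) :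
    2 / 3 * (x ^ 3 + y ^ 3) / (x ^ 2 + y ^ 2) ≤ 2 * (4 - Real.sqrt 3) / 13 * D := by
  have hx : √3 * x ≤ D := by
    rw [le_div_iff₀ (by positivity)] at h4
    linarith [mul_le_mul_of_nonneg_left h3 (sqrt_nonneg 3)]
  have hsq : x ^ 2 - y ^ 2 ≤ D ^ 2 / 4 := by
    have := (sqrt_le_left hy.le).1 h1
    nlinarith
  rw [div_le_iff₀ (by positivity)]
  linear_combination (2 / 39) * sum_cubes_le hy.le h2 hD hx h5 hsq

/-- With `f(x,y) = (2/3)·(x³+y³)/(x²+y²)`, subject to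
`√(R² − D²/4) ≤ y ≤ x ≤ R ≤ D/√3` and `x + y ≤ D` (for some `R`, `D > 0`),
one has `f(x,y) ≤ (2(4−√3)/13)·D`. -/
theorem f_upper_bound (x y R D : ℝ) (hD : 0 < D) (hx : 0 < x) (hy : 0 < y) (hR : 0 < R)
    (h1 : Real.sqrt (R ^ 2 - D ^ 2 / 4) ≤ y) (h2 : y ≤ x) (h3 : x ≤ R)
    (h4 : R ≤ D / Real.sqrt 3) (h5 : x + y ≤ D) :
    2 / 3 * (x ^ 3 + y ^ 3) / (x ^ 2 + y ^ 2) ≤ 2 * (4 - Real.sqrt 3) / 13 * D :=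
  f_upper_bound_general x y R D hD hy h1 h2 h3 h4 h5
end

section
/- For real numbers x, y, D > 0 with x + y = D, x ≥ y > 0, and x ≤ D/√3, the quantity (2/3)·(x³+y³)/(x²+y²) is at most (2(4−√3)/13)·D, with equality when x = D/√3 and y = (1 − 1/√3)D. -/
open Real

/-!
Writing `s = x + y` and `p = x y`, the quotient `(x³ + y³)/(x² + y²)` equals
`s (s² - 3p)/(s² - 2p)`, which for fixed `s ≥ 0` decreases as `p` grows. On the segment
`x + y = D`, `y ≤ x`, the product `x y` decreases as `x` moves away from `D/2`, so under
`x ≤ D/√3` it is smallest at `x = D/√3`, where the quotient takes the stated value.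
-/

lemma sum_cubes_div_sum_sq_eq (x y : ℝ) :
    (x ^ 3 + y ^ 3) / (x ^ 2 + y ^ 2) =
      (x + y) * ((x + y) ^ 2 - 3 * (x * y)) / ((x + y) ^ 2 - 2 * (x * y)) := by
  congr 1 <;> ring

lemma mul_sq_sub_div_sq_sub_antitone {s p q : ℝ} (hs : 0 ≤ s) (hqp : q ≤ p)
    (hp : 0 < s ^ 2 - 2 * p) (hq : 0 < s ^ 2 - 2 * q) :
    s * (s ^ 2 - 3 * p) / (s ^ 2 - 2 * p) ≤ s * (s ^ 2 - 3 * q) / (s ^ 2 - 2 * q) := by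
  rw [div_le_div_iff₀ hp hq]
  nlinarith [mul_nonneg (pow_nonneg hs 3) (sub_nonneg.2 hqp)]

lemma sum_cubes_div_sum_sq_le_of_mul_le {x y x' y' : ℝ} (hs : 0 ≤ x + y)
    (hsum : x + y = x' + y') (hmul : x' * y' ≤ x * y)
    (hxy : 0 < x ^ 2 + y ^ 2) (hxy' : 0 < x' ^ 2 + y' ^ 2) :
    (x ^ 3 + y ^ 3) / (x ^ 2 + y ^ 2) ≤ (x' ^ 3 + y' ^ 3) / (x' ^ 2 + y' ^ 2) := by
  rw [sum_cubes_div_sum_sq_eq, sum_cubes_div_sum_sq_eq, hsum]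
  have sq_sub : ∀ a b : ℝ, (a + b) ^ 2 - 2 * (a * b) = a ^ 2 + b ^ 2 := fun a b => by ring
  refine mul_sq_sub_div_sq_sub_antitone (hsum ▸ hs) hmul ?_ ?_
  · rwa [← hsum, sq_sub]
  · rwa [sq_sub]

lemma mul_le_mul_of_add_eq_of_le {x y x' y' : ℝ} (hyx : y ≤ x) (hxx' : x ≤ x')
    (hsum : x + y = x' + y') : x' * y' ≤ x * y := by
  obtain rfl : y' = x + y - x' := by linarith
  nlinarith [mul_nonneg (sub_nonneg.2 hxx') (sub_nonneg.2 hyx)]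

lemma sum_cubes_div_sum_sq_at_inv_sqrt_three (D : ℝ) :
    2 / 3 * ((D / √3) ^ 3 + ((1 - 1 / √3) * D) ^ 3) /
        ((D / √3) ^ 2 + ((1 - 1 / √3) * D) ^ 2) =
      2 * (4 - √3) / 13 * D := by
  have h3 : √3 ^ 2 = 3 := sq_sqrt (by norm_num)
  have hsum : D / √3 + (1 - 1 / √3) * D = D := by ring
  have hmul : D / √3 * ((1 - 1 / √3) * D) = (√3 - 1) / 3 * D ^ 2 := by
    field_simp
    linear_combination (-D ^ 2 * (√3 - 1)) * h3
  have hnum : D * (D ^ 2 - 3 * ((√3 - 1) / 3 * D ^ 2)) = (2 - √3) * D ^ 3 := by ring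
  have hden : D ^ 2 - 2 * ((√3 - 1) / 3 * D ^ 2) = (5 - 2 * √3) / 3 * D ^ 2 := by ring
  rw [mul_div_assoc, sum_cubes_div_sum_sq_eq, hsum, hmul, hnum, hden]
  rcases eq_or_ne D 0 with rfl | hD
  · simp
  have h13 : 5 - 2 * √3 ≠ 0 := by nlinarith [sqrt_nonneg 3]
  field_simp
  -- `(2 - √3)(5 + 2√3) = 4 - √3` and `(5 - 2√3)(5 + 2√3) = 13`
  linear_combination (-2) * h3

theorem case1_inequality_general (D : ℝ) :
    (∀ x y : ℝ, 0 < y → y ≤ x → x + y = D → x ≤ D / Real.sqrt 3 →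
      2 / 3 * (x ^ 3 + y ^ 3) / (x ^ 2 + y ^ 2) ≤ 2 * (4 - Real.sqrt 3) / 13 * D) ∧
    2 / 3 * ((D / Real.sqrt 3) ^ 3 + ((1 - 1 / Real.sqrt 3) * D) ^ 3) /
        ((D / Real.sqrt 3) ^ 2 + ((1 - 1 / Real.sqrt 3) * D) ^ 2) =
      2 * (4 - Real.sqrt 3) / 13 * D := by
  refine ⟨fun x y hy hyx hsum hx => ?_, sum_cubes_div_sum_sq_at_inv_sqrt_three D⟩
  have hD : 0 < D := by linarith
  have hsum' : x + y = D / √3 + (1 - 1 / √3) * D := by rw [hsum]; ring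
  calc 2 / 3 * (x ^ 3 + y ^ 3) / (x ^ 2 + y ^ 2)
      ≤ 2 / 3 * ((D / √3) ^ 3 + ((1 - 1 / √3) * D) ^ 3) /
          ((D / √3) ^ 2 + ((1 - 1 / √3) * D) ^ 2) := by
        rw [mul_div_assoc, mul_div_assoc]
        refine mul_le_mul_of_nonneg_left ?_ (by norm_num)
        exact sum_cubes_div_sum_sq_le_of_mul_le (by linarith) hsum'
          (mul_le_mul_of_add_eq_of_le hyx hx hsum') (by positivity) (by positivity)
    _ = 2 * (4 - √3) / 13 * D := sum_cubes_div_sum_sq_at_inv_sqrt_three D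

/-- For reals `x ≥ y > 0` with `x + y = D > 0` and `x ≤ D/√3`,
`(2/3)·(x³+y³)/(x²+y²) ≤ (2(4−√3)/13)·D`, with equality when `x = D/√3` and
`y = (1 − 1/√3)·D`. -/
theorem case1_inequality (D : ℝ) (hD : 0 < D) :
    (∀ x y : ℝ, 0 < y → y ≤ x → x + y = D → x ≤ D / Real.sqrt 3 →
      2 / 3 * (x ^ 3 + y ^ 3) / (x ^ 2 + y ^ 2) ≤ 2 * (4 - Real.sqrt 3) / 13 * D) ∧
    2 / 3 * ((D / Real.sqrt 3) ^ 3 + ((1 - 1 / Real.sqrt 3) * D) ^ 3) /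
        ((D / Real.sqrt 3) ^ 2 + ((1 - 1 / Real.sqrt 3) * D) ^ 2) =
      2 * (4 - Real.sqrt 3) / 13 * D :=
  case1_inequality_general D
end

section
/- Let S be the unit square and v one of its vertices. Then the average distance from v to points of S equals (√2 + ln(1+√2))/3, and for any point s ∈ S the average distance μ_S(s) is at most this value. -/
/-!
The map `s ↦ ∫ q in S, dist s q` is convex, being an average of the convex functions
`s ↦ dist s q`, so on `S`, the convex hull of its vertices, it is largest at a vertex. The
reflections `x ↦ 1 - x` of either coordinate preserve `S` and permute its vertices, so every
vertex gives `∫₀¹∫₀¹ √(x² + y²) dy dx`, which two explicit primitives evaluate.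
-/

open MeasureTheory Real Set

theorem convexOn_integral_dist {E : Type*} [NormedAddCommGroup E] [NormedSpace ℝ E]
    [MeasurableSpace E] {μ : Measure E} (hμ : ∀ x, Integrable (dist x ·) μ) :
    ConvexOn ℝ univ fun x => ∫ q, dist x q ∂μ := by
  refine ⟨convex_univ, fun x _ y _ a b ha hb hab => ?_⟩
  calc ∫ q, dist (a • x + b • y) q ∂μ ≤ ∫ q, (a * dist x q + b * dist y q) ∂μ :=
        integral_mono (hμ _) (((hμ x).const_mul a).add ((hμ y).const_mul b)) fun q => by
          simpa only [smul_eq_mul] using (convexOn_univ_dist q).2 trivial trivial ha hb hab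
    _ = a • ∫ q, dist x q ∂μ + b • ∫ q, dist y q ∂μ := by
        rw [integral_add ((hμ x).const_mul a) ((hμ y).const_mul b), integral_const_mul,
          integral_const_mul, smul_eq_mul, smul_eq_mul]

def unitSquare : Set (EuclideanSpace ℝ (Fin 2)) :=
  {p | p 0 ∈ Icc (0:ℝ) 1 ∧ p 1 ∈ Icc (0:ℝ) 1}

def unitSquareVertices : Set (EuclideanSpace ℝ (Fin 2)) :=
  {p | (p 0 = 0 ∨ p 0 = 1) ∧ (p 1 = 0 ∨ p 1 = 1)}

theorem unitSquare_subset_convexHull_vertices :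
    unitSquare ⊆ convexHull ℝ unitSquareVertices := by
  rintro s ⟨⟨ha₀, ha₁⟩, ⟨hb₀, hb₁⟩⟩
  have hconv := convex_convexHull ℝ unitSquareVertices
  have vertex_mem : ∀ c d : ℝ, (c = 0 ∨ c = 1) → (d = 0 ∨ d = 1) →
      !₂[c, d] ∈ convexHull ℝ unitSquareVertices := fun c d hc hd =>
    subset_convexHull ℝ _ ⟨hc, hd⟩
  have edge_mem : ∀ c : ℝ, (c = 0 ∨ c = 1) →
      !₂[c, s 1] ∈ convexHull ℝ unitSquareVertices := by
    intro c hc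
    convert hconv (vertex_mem c 0 hc (.inl rfl)) (vertex_mem c 1 hc (.inr rfl))
      (sub_nonneg.2 hb₁) hb₀ (sub_add_cancel 1 (s 1)) using 1
    ext i; fin_cases i <;> simp [sub_mul]
  convert hconv (edge_mem 0 (.inl rfl)) (edge_mem 1 (.inr rfl))
    (sub_nonneg.2 ha₁) ha₀ (sub_add_cancel 1 (s 0)) using 1
  ext i; fin_cases i <;> simp [sub_mul]

theorem isCompact_unitSquare : IsCompact unitSquare := by
  have h : unitSquare =
      (PiLp.homeomorph 2 fun _ : Fin 2 => ℝ) ⁻¹' univ.pi fun _ => Icc 0 1 := by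
    ext p
    simp only [unitSquare, mem_preimage, mem_univ_pi, Fin.forall_fin_two]
    rfl
  rw [h, Homeomorph.isCompact_preimage]
  exact isCompact_univ_pi fun _ => isCompact_Icc

theorem integral_unitSquare {f : EuclideanSpace ℝ (Fin 2) → ℝ}
    (hf : IntegrableOn f unitSquare) :
    ∫ q in unitSquare, f q = ∫ x in (0:ℝ)..1, ∫ y in (0:ℝ)..1, f !₂[x, y] := by
  let e : ℝ × ℝ ≃ᵐ EuclideanSpace ℝ (Fin 2) :=
    MeasurableEquiv.finTwoArrow.symm.trans (MeasurableEquiv.toLp 2 (Fin 2 → ℝ))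
  have he : MeasurePreserving e :=
    (PiLp.volume_preserving_toLp (Fin 2)).comp (volume_preserving_finTwoArrow ℝ).symm
  have hpre : e ⁻¹' unitSquare = Icc 0 1 ×ˢ Icc 0 1 := rfl
  have hprod : IntegrableOn (fun p : ℝ × ℝ => f !₂[p.1, p.2]) (Icc 0 1 ×ˢ Icc 0 1) := by
    rw [← hpre]
    exact (he.integrableOn_comp_preimage e.measurableEmbedding).2 hf
  rw [← he.setIntegral_preimage_emb e.measurableEmbedding, hpre]
  simp only [intervalIntegral.integral_of_le zero_le_one, ← integral_Icc_eq_integral_Ioc]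
  exact setIntegral_prod _ hprod

theorem integral_unitInterval_comp_sq_sub {c : ℝ} (hc : c = 0 ∨ c = 1) (g : ℝ → ℝ) :
    ∫ x in (0:ℝ)..1, g ((c - x) ^ 2) = ∫ x in (0:ℝ)..1, g (x ^ 2) := by
  rcases hc with rfl | rfl
  · simp only [zero_sub, neg_sq]
  · simpa using
      intervalIntegral.integral_comp_sub_left (fun x => g (x ^ 2)) (1:ℝ) (a := 0) (b := 1)

theorem hasDerivAt_sqrt_sq_add_sq_primitive {a : ℝ} (ha : a ≠ 0) (t : ℝ) :
    HasDerivAt (fun t => (t * √(a ^ 2 + t ^ 2) + a ^ 2 * log (t + √(a ^ 2 + t ^ 2))) / 2)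
      √(a ^ 2 + t ^ 2) t := by
  have hpos : 0 < a ^ 2 + t ^ 2 := by positivity
  have hroot : HasDerivAt (fun t => √(a ^ 2 + t ^ 2)) (t / √(a ^ 2 + t ^ 2)) t := by
    convert ((hasDerivAt_pow 2 t).const_add (a ^ 2)).sqrt hpos.ne' using 1
    field_simp
    ring
  have hlog_arg : 0 < t + √(a ^ 2 + t ^ 2) := by
    have : -t < √(a ^ 2 + t ^ 2) := lt_sqrt_of_sq_lt (by nlinarith [sq_pos_of_ne_zero ha])
    linarith
  have hsq : √(a ^ 2 + t ^ 2) ^ 2 = a ^ 2 + t ^ 2 := sq_sqrt hpos.le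
  refine (((hasDerivAt_id' t).fun_mul hroot).fun_add ((((hasDerivAt_id' t).fun_add hroot).log
    hlog_arg.ne').const_mul (a ^ 2))).div_const 2 |>.congr_deriv ?_
  field_simp
  linear_combination -(t + √(a ^ 2 + t ^ 2)) * hsq

-- Valid for negative `a` too, since Mathlib's `log a` is `log |a|`.
theorem integral_sqrt_sq_add_sq {a : ℝ} (ha : a ≠ 0) :
    ∫ t in (0:ℝ)..1, √(a ^ 2 + t ^ 2) =
      (√(a ^ 2 + 1) + a ^ 2 * log (1 + √(a ^ 2 + 1)) - a ^ 2 * log a) / 2 := by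
  rw [intervalIntegral.integral_eq_sub_of_hasDerivAt
    (fun t _ => hasDerivAt_sqrt_sq_add_sq_primitive ha t)
    (Continuous.intervalIntegrable (by fun_prop) _ _)]
  simp only [zero_pow two_ne_zero, add_zero, one_pow, sqrt_sq_eq_abs, log_abs, zero_mul, zero_add,
    one_mul]
  ring

theorem continuous_pow_mul_log {n : ℕ} (hn : n ≠ 0) : Continuous fun x => x ^ n * log x := by
  obtain ⟨m, rfl⟩ := Nat.exists_eq_succ_of_ne_zero hn
  simpa only [pow_succ, mul_assoc] using (continuous_pow m).fun_mul continuous_mul_log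

theorem hasDerivAt_integral_sqrt_sq_add_sq_primitive {x : ℝ} (hx : 0 < x) :
    HasDerivAt (fun x => (2 * x * √(x ^ 2 + 1) + arsinh x + x ^ 3 * log (1 + √(x ^ 2 + 1))
        - x ^ 3 * log x) / 6)
      ((√(x ^ 2 + 1) + x ^ 2 * log (1 + √(x ^ 2 + 1)) - x ^ 2 * log x) / 2) x := by
  have hpos : 0 < x ^ 2 + 1 := by positivity
  have hsq : √(x ^ 2 + 1) ^ 2 = x ^ 2 + 1 := sq_sqrt hpos.le
  have hroot : HasDerivAt (fun x => √(x ^ 2 + 1)) (x / √(x ^ 2 + 1)) x := by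
    convert ((hasDerivAt_pow 2 x).add_const 1).sqrt hpos.ne' using 1
    field_simp
    ring
  have harsinh : HasDerivAt arsinh (√(x ^ 2 + 1))⁻¹ x := by
    simpa only [add_comm 1 (x ^ 2)] using hasDerivAt_arsinh x
  have hcube : HasDerivAt (fun x => x ^ 3) (3 * x ^ 2) x := by
    simpa using hasDerivAt_pow 3 x
  refine ((((((hasDerivAt_id' x).const_mul 2).fun_mul hroot).fun_add harsinh).fun_add
    (hcube.fun_mul ((hroot.const_add 1).log (by positivity)))).fun_sub
    (hcube.fun_mul ((hasDerivAt_id' x).log hx.ne'))).div_const 6 |>.congr_deriv ?_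
  field_simp
  linear_combination (-2 - 2 * x ^ 2 - 2 * √(x ^ 2 + 1)) * hsq

theorem integral_integral_sqrt_sq_add_sq :
    ∫ x in (0:ℝ)..1, ∫ y in (0:ℝ)..1, √(x ^ 2 + y ^ 2) = (√2 + log (1 + √2)) / 3 := by
  have hinner : ∀ᵐ x, x ∈ uIoc (0:ℝ) 1 → ∫ y in (0:ℝ)..1, √(x ^ 2 + y ^ 2) =
      (√(x ^ 2 + 1) + x ^ 2 * log (1 + √(x ^ 2 + 1)) - x ^ 2 * log x) / 2 :=
    .of_forall fun x hx => integral_sqrt_sq_add_sq (uIoc_of_le (zero_le_one' ℝ) ▸ hx).1.ne'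
  have hcube := continuous_pow_mul_log three_ne_zero
  have hsquare := continuous_pow_mul_log two_ne_zero
  have hlog : Continuous fun x => log (1 + √(x ^ 2 + 1)) :=
    (by fun_prop : Continuous _).log fun x => by positivity
  have harsinh := continuous_arsinh
  rw [intervalIntegral.integral_congr_ae hinner,
    intervalIntegral.integral_eq_sub_of_hasDerivAt_of_le zero_le_one (by fun_prop)
      (fun x hx => hasDerivAt_integral_sqrt_sq_add_sq_primitive hx.1)
      (Continuous.intervalIntegrable (by fun_prop) _ _)]
  norm_num [arsinh]
  ring

theorem integral_dist_vertex_unitSquare {w : EuclideanSpace ℝ (Fin 2)}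
    (hw : w ∈ unitSquareVertices) :
    ∫ q in unitSquare, dist w q = (√2 + log (1 + √2)) / 3 := by
  rw [integral_unitSquare ((by fun_prop : Continuous (dist w)).continuousOn.integrableOn_compact
    isCompact_unitSquare)]
  simp only [EuclideanSpace.dist_eq, Fin.sum_univ_two, Real.dist_eq, sq_abs, Matrix.cons_val_zero,
    Matrix.cons_val_one]
  calc _ = ∫ x in (0:ℝ)..1, ∫ y in (0:ℝ)..1, √((w 0 - x) ^ 2 + y ^ 2) :=
        intervalIntegral.integral_congr fun x _ =>
          integral_unitInterval_comp_sq_sub hw.2 fun u => √((w 0 - x) ^ 2 + u)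
    _ = ∫ x in (0:ℝ)..1, ∫ y in (0:ℝ)..1, √(x ^ 2 + y ^ 2) :=
        integral_unitInterval_comp_sq_sub hw.1 fun u => ∫ y in (0:ℝ)..1, √(u + y ^ 2)
    _ = (√2 + log (1 + √2)) / 3 := integral_integral_sqrt_sq_add_sq

/-- Let `S = [0,1]²` be the unit square and `v` one of its vertices. Then the average
distance from `v` to the points of `S` equals `(√2 + ln(1+√2))/3`, and for every point
`s ∈ S` the average distance `μ_S(s)` is at most this value (`area(S) = 1`). -/
theorem unit_square_avg_dist (S : Set (EuclideanSpace ℝ (Fin 2)))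
    (hS : S = {p | p 0 ∈ Set.Icc (0:ℝ) 1 ∧ p 1 ∈ Set.Icc (0:ℝ) 1})
    (v : EuclideanSpace ℝ (Fin 2))
    (hv : (v 0 = 0 ∨ v 0 = 1) ∧ (v 1 = 0 ∨ v 1 = 1)) :
    (∫ q in S, dist v q) = (Real.sqrt 2 + Real.log (1 + Real.sqrt 2)) / 3 ∧
    ∀ s ∈ S, (∫ q in S, dist s q) ≤ (Real.sqrt 2 + Real.log (1 + Real.sqrt 2)) / 3 := by
  obtain rfl : S = unitSquare := hS
  have hconvex : ConvexOn ℝ univ fun s => ∫ q in unitSquare, dist s q :=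
    convexOn_integral_dist fun s =>
      (by fun_prop : Continuous (dist s)).continuousOn.integrableOn_compact isCompact_unitSquare
  refine ⟨integral_dist_vertex_unitSquare hv, fun s hs => ?_⟩
  obtain ⟨w, hw, hsw⟩ :=
    hconvex.exists_ge_of_mem_convexHull (subset_univ _) (unitSquare_subset_convexHull_vertices hs)
  exact hsw.trans_eq (integral_dist_vertex_unitSquare hw)
end
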